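/- If k is a field of characteristic p and p divides |X| for some cell X of a coherent configuration C, then the adjacency algebra of C over k is not semisimple. -/

import Mathlib

open Finset Matrix

/-- A coherent configuration on a finite set `V`: a partition of `V × V` into nonempty
basis relations such that the diagonal is a union of relations, the set of relations is
closed under transposition, and the intersection numbers are well defined. -/
structure CoherentConfiguration (V : Type) [Fintype V] [DecidableEq V] where
  rels : Finset (Finset (V × V))
  nonempty : ∀ r ∈ rels, r.Nonempty
  partition : ∀ p : V × V, ∃! r, r ∈ rels ∧ p ∈ r
  diag_union : ∀ r ∈ rels, (∃ p ∈ r, p.1 = p.2) → ∀ q ∈ r, q.1 = q.2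
  transpose_mem : ∀ r ∈ rels, r.image (fun p => (p.2, p.1)) ∈ rels
  inter_num : ∀ r ∈ rels, ∀ s ∈ rels, ∀ t ∈ rels, ∀ p ∈ t, ∀ q ∈ t,
    (univ.filter fun v => (p.1, v) ∈ r ∧ (v, p.2) ∈ s).card =
    (univ.filter fun v => (q.1, v) ∈ r ∧ (v, q.2) ∈ s).card

/-- A cell of a coherent configuration: a subset `X ⊆ V` with `Δ(X)` a basis relation. -/
def CoherentConfiguration.IsCell {V : Type} [Fintype V] [DecidableEq V]
    (C : CoherentConfiguration V) (X : Finset V) : Prop :=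
  X.image (fun x => (x, x)) ∈ C.rels

/-- The adjacency matrix of a relation on `V`, with entries in `K`. -/
def adjMat {V : Type} [Fintype V] [DecidableEq V] (K : Type*) [Semiring K]
    (r : Finset (V × V)) : Matrix V V K :=
  Matrix.of fun u v => if (u, v) ∈ r then 1 else 0


/-!
Let `e` be the indicator vector of the cell `X` and `J_X = e eᵀ` the all-ones matrix on `X × X`.
Since `Δ(X)` is a basis relation and the basis relations sum to the all-ones matrix `J`,
`J_X = A_{Δ(X)} J A_{Δ(X)}` lies in the adjacency algebra. For every `M` in the algebra,
`J_X M J_X = (eᵀ M e) J_X`, and `eᵀ M e` vanishes: the algebra is the span of the adjacency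
matrices, and for a basis relation `r` every `x ∈ X` has the same number of `r`-neighbours in
`X`, so `eᵀ A_r e` is a multiple of `|X|`, hence zero in characteristic `p`. Thus `z = J_X` is a
nonzero element with `z a z = 0` for all `a`; then every `1 + a z` is a unit, i.e. `z` lies in the
Jacobson radical, which is trivial for a semisimple ring.
-/

theorem IsSemisimpleRing.eq_zero_of_forall_mul_mul_eq_zero {R : Type*} [Ring R]
    [IsSemisimpleRing R] {z : R} (h : ∀ a, z * a * z = 0) : z = 0 := by
  have hz : z ∈ Ideal.jacobson (⊥ : Ideal R) := Ideal.mem_jacobson_iff.mpr fun y => by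
    have hyz : IsNilpotent (y * z) := ⟨2, by rw [pow_two, mul_assoc, ← mul_assoc z, h, mul_zero]⟩
    obtain ⟨u, hu⟩ := hyz.isUnit_add_one
    refine ⟨↑u⁻¹, ?_⟩
    rw [Ideal.mem_bot, mul_assoc, ← mul_add_one, ← hu, Units.inv_mul, sub_self]
  rwa [Ideal.jacobson_bot, IsSemisimpleRing.jacobson_eq_bot] at hz

namespace Matrix

theorem vecMulVec_mul_mul_vecMulVec {l m n o R : Type*} [Fintype m] [Fintype n]
    [CommSemiring R] (u : l → R) (v : m → R) (M : Matrix m n R) (w : n → R) (x : o → R) :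
    vecMulVec u v * M * vecMulVec w x = (v ⬝ᵥ M *ᵥ w) • vecMulVec u x := by
  rw [vecMulVec_mul, vecMulVec_mul_vecMulVec, vecMulVec_smul, dotProduct_mulVec]

theorem diagonal_mul_ones_mul_diagonal {n R : Type*} [Fintype n] [DecidableEq n] [Semiring R]
    (d : n → R) : diagonal d * (of fun _ _ => 1) * diagonal d = vecMulVec d d := by
  ext i j
  simp [vecMulVec_apply]

end Matrix

section AdjMat

variable {V : Type} [Fintype V] [DecidableEq V] (K : Type*) [Semiring K]

theorem adjMat_mul_adjMat_apply (r s : Finset (V × V)) (u w : V) :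
    (adjMat K r * adjMat K s) u w = #{v | (u, v) ∈ r ∧ (v, w) ∈ s} := by
  simp only [mul_apply, adjMat, of_apply, ite_zero_mul_ite_zero, mul_one, natCast_card_filter]

theorem adjMat_image_diag (X : Finset V) :
    adjMat K (X.image fun x => (x, x)) = diagonal ((X : Set V).indicator 1) := by
  ext u v
  rcases eq_or_ne u v with rfl | huv
  · simp [adjMat, Set.indicator_apply]
  · simp [adjMat, huv, huv.symm]

theorem indicator_dotProduct_adjMat_mulVec (X : Finset V) (r : Finset (V × V)) :
    (X : Set V).indicator 1 ⬝ᵥ adjMat K r *ᵥ (X : Set V).indicator 1 =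
      ((∑ x ∈ X, #{y ∈ X | (x, y) ∈ r} : ℕ) : K) := by
  simp only [mulVec, dotProduct, adjMat, of_apply, Set.indicator_apply, mem_coe, Pi.one_apply,
    mul_ite, mul_one, mul_zero, ite_mul, one_mul, zero_mul, sum_ite_mem, univ_inter, Nat.cast_sum,
    natCast_card_filter]

end AdjMat

namespace CoherentConfiguration

variable {V : Type} [Fintype V] [DecidableEq V] (C : CoherentConfiguration V)

theorem eq_of_mem_of_mem {r s : Finset (V × V)} (hr : r ∈ C.rels) (hs : s ∈ C.rels)
    {q : V × V} (hqr : q ∈ r) (hqs : q ∈ s) : r = s :=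
  (C.partition q).unique ⟨hr, hqr⟩ ⟨hs, hqs⟩

theorem sum_adjMat (K : Type*) [Semiring K] :
    ∑ r ∈ C.rels, adjMat K r = of fun _ _ => 1 := by
  ext u v
  obtain ⟨t, ⟨ht, huv⟩, -⟩ := C.partition (u, v)
  rw [Matrix.sum_apply, sum_eq_single_of_mem t ht]
  · simp [adjMat, huv]
  · intro s hs hst
    simp only [adjMat, of_apply, ite_eq_right_iff]
    exact fun hs' => absurd (C.eq_of_mem_of_mem hs ht hs' huv) hst

section AdjacencySpan

variable (k : Type*) [Field k]

def adjacencySpan : Submodule k (Matrix V V k) :=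
  Submodule.span k {M | ∃ r ∈ C.rels, M = adjMat k r}

variable {k}

theorem mem_adjacencySpan_of_forall_eq {M : Matrix V V k}
    (hM : ∀ t ∈ C.rels, ∀ a ∈ t, ∀ b ∈ t, M a.1 a.2 = M b.1 b.2) : M ∈ C.adjacencySpan k := by
  have hsum : M = ∑ t ∈ C.rels, M ⊙ adjMat k t := by
    ext u v
    rw [Matrix.sum_apply]
    simp_rw [hadamard_apply]
    rw [← mul_sum, ← Matrix.sum_apply, C.sum_adjMat, of_apply, mul_one]
  rw [hsum]
  refine Submodule.sum_mem _ fun t ht => ?_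
  obtain ⟨a, ha⟩ := C.nonempty t ht
  have hconst : M ⊙ adjMat k t = M a.1 a.2 • adjMat k t := by
    ext u v
    by_cases huv : (u, v) ∈ t
    · simp [adjMat, huv, hM t ht _ huv a ha]
    · simp [adjMat, huv]
  rw [hconst]
  exact Submodule.smul_mem _ _ (Submodule.subset_span ⟨t, ht, rfl⟩)

theorem one_mem_adjacencySpan : (1 : Matrix V V k) ∈ C.adjacencySpan k := by
  refine C.mem_adjacencySpan_of_forall_eq fun t ht a ha b hb => ?_
  have hdiag : a.1 = a.2 ↔ b.1 = b.2 :=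
    ⟨fun h => C.diag_union t ht ⟨a, ha, h⟩ b hb, fun h => C.diag_union t ht ⟨b, hb, h⟩ a ha⟩
  simp [one_apply, hdiag]

theorem mul_mem_adjacencySpan {M N : Matrix V V k} (hM : M ∈ C.adjacencySpan k)
    (hN : N ∈ C.adjacencySpan k) : M * N ∈ C.adjacencySpan k := by
  have hle : C.adjacencySpan k * C.adjacencySpan k ≤ C.adjacencySpan k := by
    rw [adjacencySpan, Submodule.span_mul_span, Submodule.span_le]
    rintro _ ⟨_, ⟨r, hr, rfl⟩, _, ⟨s, hs, rfl⟩, rfl⟩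
    refine C.mem_adjacencySpan_of_forall_eq fun t ht a ha b hb => ?_
    dsimp only
    rw [adjMat_mul_adjMat_apply, adjMat_mul_adjMat_apply, C.inter_num r hr s hs t ht a ha b hb]
  exact hle (Submodule.mul_mem_mul hM hN)

theorem adjoin_adjMat_eq_adjacencySpan :
    Subalgebra.toSubmodule (Algebra.adjoin k {M | ∃ r ∈ C.rels, M = adjMat k r}) =
      C.adjacencySpan k :=
  le_antisymm
    (Algebra.adjoin_le (S := (C.adjacencySpan k).toSubalgebra C.one_mem_adjacencySpan
      fun _ _ => C.mul_mem_adjacencySpan) Submodule.subset_span)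
    (Algebra.span_le_adjoin k _)

end AdjacencySpan

namespace IsCell

variable {C} {X : Finset V}

theorem snd_mem_of_mem (hX : C.IsCell X) {r : Finset (V × V)} (hr : r ∈ C.rels) {a b : V × V}
    (ha : a ∈ r) (hb : b ∈ r) (haX : a.2 ∈ X) : b.2 ∈ X := by
  -- the intersection number of `r` and `Δ(X)` at `(u, w) ∈ r` is `1` if `w ∈ X` and `0` otherwise
  have hpos : 0 < #{v | (a.1, v) ∈ r ∧ (v, a.2) ∈ X.image fun x => (x, x)} :=
    card_pos.mpr ⟨a.2, by simpa [haX]⟩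
  rw [C.inter_num r hr _ hX r hr a ha b hb] at hpos
  obtain ⟨v, hv⟩ := card_pos.mp hpos
  simp only [mem_filter, mem_univ, true_and, mem_image, Prod.mk.injEq] at hv
  obtain ⟨-, x, hx, rfl, rfl⟩ := hv
  exact hx

theorem card_filter_fst_eq (hX : C.IsCell X) {r : Finset (V × V)} (hr : r ∈ C.rels) {x x' : V}
    (hx : x ∈ X) (hx' : x' ∈ X) : #{v | (x, v) ∈ r} = #{v | (x', v) ∈ r} := by
  -- the out-degree of `x` in `r` is the intersection number of `r` and `rᵀ` at `(x, x) ∈ Δ(X)`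
  simpa using C.inter_num r hr _ (C.transpose_mem r hr) _ hX (x, x) (by simpa) (x', x') (by simpa)

theorem card_filter_mem_eq (hX : C.IsCell X) {r : Finset (V × V)} (hr : r ∈ C.rels) {x x' : V}
    (hx : x ∈ X) (hx' : x' ∈ X) : #{y ∈ X | (x, y) ∈ r} = #{y ∈ X | (x', y) ∈ r} := by
  by_cases h : ∃ a ∈ r, a.2 ∈ X
  · obtain ⟨a, ha, haX⟩ := h
    have hfull (z : V) : X.filter (fun y => (z, y) ∈ r) = univ.filter fun v => (z, v) ∈ r := by
      ext y
      simpa using fun hy => hX.snd_mem_of_mem hr ha hy haX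
    rw [hfull, hfull]
    exact hX.card_filter_fst_eq hr hx hx'
  · have hempty (z : V) : X.filter (fun y => (z, y) ∈ r) = ∅ :=
      filter_false_of_mem fun y hy hzy => h ⟨_, hzy, hy⟩
    rw [hempty, hempty]

theorem dvd_sum_card_filter_mem (hX : C.IsCell X) {p : ℕ} (hdvd : p ∣ #X)
    {r : Finset (V × V)} (hr : r ∈ C.rels) : p ∣ ∑ x ∈ X, #{y ∈ X | (x, y) ∈ r} := by
  rcases X.eq_empty_or_nonempty with rfl | ⟨x₀, hx₀⟩
  · simp
  · rw [sum_const_nat fun x hx => hX.card_filter_mem_eq hr hx hx₀]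
    exact dvd_mul_of_dvd_left hdvd _

theorem indicator_dotProduct_mulVec_eq_zero (hX : C.IsCell X) {k : Type*} [Field k] {p : ℕ}
    [CharP k p] (hdvd : p ∣ #X) {M : Matrix V V k} (hM : M ∈ C.adjacencySpan k) :
    (X : Set V).indicator 1 ⬝ᵥ M *ᵥ (X : Set V).indicator 1 = 0 := by
  induction hM using Submodule.span_induction with
  | mem M hM =>
    obtain ⟨r, hr, rfl⟩ := hM
    rw [indicator_dotProduct_adjMat_mulVec, CharP.cast_eq_zero_iff k p]
    exact hX.dvd_sum_card_filter_mem hdvd hr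
  | zero => simp
  | add M N _ _ hM hN => rw [add_mulVec, dotProduct_add, hM, hN, add_zero]
  | smul c M _ hM => rw [smul_mulVec, dotProduct_smul, hM, smul_zero]

end IsCell

end CoherentConfiguration

theorem stmt9_general {V : Type} [Fintype V] [DecidableEq V] (C : CoherentConfiguration V)
    (k : Type*) [Field k] (p : ℕ) [CharP k p]
    (X : Finset V) (hX : C.IsCell X) (hdvd : p ∣ X.card) :
    ¬ IsSemisimpleRing
      (Algebra.adjoin k {M : Matrix V V k | ∃ r ∈ C.rels, M = adjMat k r}) := by
  intro hss
  set A := Algebra.adjoin k {M : Matrix V V k | ∃ r ∈ C.rels, M = adjMat k r}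
  set e : V → k := (X : Set V).indicator 1
  have hmem (r) (hr : r ∈ C.rels) : adjMat k r ∈ A := Algebra.subset_adjoin ⟨r, hr, rfl⟩
  have hJ : vecMulVec e e ∈ A := by
    rw [← diagonal_mul_ones_mul_diagonal, ← adjMat_image_diag, ← C.sum_adjMat]
    exact mul_mem (mul_mem (hmem _ hX) (sum_mem hmem)) (hmem _ hX)
  have hJ0 : (⟨vecMulVec e e, hJ⟩ : A) = 0 :=
    IsSemisimpleRing.eq_zero_of_forall_mul_mul_eq_zero fun a => Subtype.ext <| by
      have ha : (a : Matrix V V k) ∈ C.adjacencySpan k :=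
        C.adjoin_adjMat_eq_adjacencySpan (k := k) ▸ a.2
      have h0 : e ⬝ᵥ (a : Matrix V V k) *ᵥ e = 0 := hX.indicator_dotProduct_mulVec_eq_zero hdvd ha
      simp [vecMulVec_mul_mul_vecMulVec, h0]
  obtain ⟨q, hq⟩ := C.nonempty _ hX
  obtain ⟨x, hx, -⟩ := mem_image.mp hq
  simpa [e, vecMulVec_apply, hx] using congr_arg (fun M : A => (M : Matrix V V k) x x) hJ0

/-- If `k` is a field of (positive) characteristic `p` and `p` divides `|X|` for some cell
`X` of a coherent configuration, then the adjacency algebra over `k` is not semisimple. -/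
theorem stmt9 {V : Type} [Fintype V] [DecidableEq V] (C : CoherentConfiguration V)
    (k : Type*) [Field k] (p : ℕ) (hp : p.Prime) [CharP k p]
    (X : Finset V) (hX : C.IsCell X) (hdvd : p ∣ X.card) :
    ¬ IsSemisimpleRing
      (Algebra.adjoin k {M : Matrix V V k | ∃ r ∈ C.rels, M = adjMat k r}) :=
  stmt9_general C k p X hX hdvd
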